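/- The function Sc(t) = −2 + 1.97t + (2+4t)/(0.01+2t(1+t))² satisfies Sc(0) = 19998, and Sc is bounded below on [0,∞) by a positive constant. -/

import Mathlib

/-!
Clearing the positive denominator, `Sc t ≥ 1/10` becomes the quintic inequality
`(2.1 - 1.97 t) (0.01 + 2t(1+t))² ≤ 2 + 4t`. The difference of the two sides is smallest
(about `0.68`) near `t = 3/4`, and `nlinarith` writes it as a nonnegative combination of
the terms `tᵏ (t - 3/4)²`.
-/

noncomputable def scalarCurvature (t : ℝ) : ℝ :=
  -2 + 1.97 * t + (2 + 4 * t) / (0.01 + 2 * t * (1 + t)) ^ 2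

lemma scalarCurvature_zero : scalarCurvature 0 = 19998 := by
  norm_num [scalarCurvature]

lemma mul_sq_denominator_le {t : ℝ} (ht : 0 ≤ t) :
    (2.1 - 1.97 * t) * (0.01 + 2 * t * (1 + t)) ^ 2 ≤ 2 + 4 * t := by
  nlinarith [sq_nonneg (t - 3/4), mul_nonneg ht (sq_nonneg (t - 3/4)),
    mul_nonneg (pow_nonneg ht 2) (sq_nonneg (t - 3/4)),
    mul_nonneg (pow_nonneg ht 3) (sq_nonneg (t - 3/4))]

lemma one_tenth_le_scalarCurvature {t : ℝ} (ht : 0 ≤ t) : 0.1 ≤ scalarCurvature t := by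
  have hden : 0 < (0.01 + 2 * t * (1 + t)) ^ 2 := by positivity
  have hfrac : 2.1 - 1.97 * t ≤ (2 + 4 * t) / (0.01 + 2 * t * (1 + t)) ^ 2 :=
    (le_div_iff₀ hden).2 (mul_sq_denominator_le ht)
  unfold scalarCurvature
  linarith

theorem stmt_10 (Sc : ℝ → ℝ)
    (hSc : Sc = fun t => -2 + 1.97*t + (2 + 4*t)/(0.01 + 2*t*(1+t))^2) :
    Sc 0 = 19998 ∧ ∃ C : ℝ, 0 < C ∧ ∀ t : ℝ, 0 ≤ t → C ≤ Sc t := by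
  subst hSc
  exact ⟨scalarCurvature_zero, 0.1, by norm_num, fun t ht => one_tenth_le_scalarCurvature ht⟩
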